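/- Let X be a complex separable Banach space and let T ∈ B(X) be invertible and transitive (T has no nontrivial closed invariant subspace). Let x₀ ∈ X be nonzero with 𝔑 ≠ X, where 𝔑 is the closed linear span of {T^{−n}x₀ : n ≥ 1}, and set xₙ = T^{−n}x₀ for n ≥ 1. Then there exists a sequence (xₙ*)_{n≥1} ⊆ X* such that ⟨xᵢ*, xⱼ⟩ = δᵢⱼ for all i, j ≥ 1, i.e., {(xₙ, xₙ*)} is a bi-orthogonal system. -/

import Mathlib

/-- `𝔑₋ₖ`: the closed linear span of `{S^n x₀ : n ≥ k}` (here `S = T⁻¹`). -/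
def closedSpanOrbitFrom {X : Type*} [NormedAddCommGroup X] [NormedSpace ℂ X]
    (S : X →L[ℂ] X) (x₀ : X) (k : ℕ) : Submodule ℂ X :=
  (Submodule.span ℂ {y : X | ∃ n : ℕ, k ≤ n ∧ y = (S ^ n) x₀}).topologicalClosure

/-- `T` is transitive: it has no nontrivial closed invariant subspace. -/
def IsTransitiveOp {X : Type*} [NormedAddCommGroup X] [NormedSpace ℂ X]
    (T : X →L[ℂ] X) : Prop :=
  ∀ Y : Submodule ℂ X, IsClosed (Y : Set X) → (∀ x ∈ Y, T x ∈ Y) → Y = ⊥ ∨ Y = ⊤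

/-!
Write `𝔑ₖ` for the closed span of `{S^n x₀ : n ≥ k}`. If `S^k x₀ ∈ 𝔑ₖ₊₁` for some `k ≥ 1`, then
`𝔑ₖ₊₁ = 𝔑ₖ ⊇ T 𝔑ₖ₊₁` is a closed `T`-invariant subspace, nonzero (it contains
`S^(k+1) x₀ ≠ 0`) and contained in `𝔑 = 𝔑₁ ≠ X`, contradicting transitivity. So Hahn–Banach gives
functionals `gₖ` with `gₖ (S^k x₀) = 1` vanishing on `𝔑ₖ₊₁`; the matrix `(gᵢ (S^j x₀))` is then
lower unitriangular, and inverting it (`triangularDual`) yields the biorthogonal functionals.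
-/

theorem Submodule.exists_dual_eq_one_of_notMem {𝕜 E : Type*} [RCLike 𝕜] [NormedAddCommGroup E]
    [NormedSpace 𝕜 E] {N : Submodule 𝕜 E} (hN : IsClosed (N : Set E)) {x : E} (hx : x ∉ N) :
    ∃ f : StrongDual 𝕜 E, f x = 1 ∧ ∀ y ∈ N, f y = 0 := by
  -- the norm on `E ⧸ N` is found by instance search, which needs closedness of `N` in context
  have : IsClosed (N : Set E) := hN
  obtain ⟨f, hf⟩ := SeparatingDual.exists_eq_one (R := 𝕜) (x := N.mkQL x)
    ((Submodule.Quotient.mk_eq_zero N).not.mpr hx)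
  exact ⟨f.comp N.mkQL, hf, fun y hy => by simp [(Submodule.Quotient.mk_eq_zero N).mpr hy]⟩

section Triangular

variable {R M : Type*} [CommRing R] [TopologicalSpace R] [IsTopologicalRing R]
  [TopologicalSpace M] [AddCommGroup M] [Module R M]

noncomputable def triangularDual (g : ℕ → M →L[R] R) (x : ℕ → M) (i : ℕ) : M →L[R] R :=
  g i - ∑ l : Fin i, g i (x l) • triangularDual g x l
decreasing_by exact l.isLt

theorem triangularDual_apply (g : ℕ → M →L[R] R) (x : ℕ → M)
    (hdiag : ∀ i, g i (x i) = 1) (hlt : ∀ i j, i < j → g i (x j) = 0) (i j : ℕ) :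
    triangularDual g x i (x j) = if i = j then 1 else 0 := by
  induction i using Nat.strong_induction_on with
  | _ i ih =>
    have hsum : ∑ l : Fin i, g i (x l) * triangularDual g x l (x j) =
        if j < i then g i (x j) else 0 := by
      rw [Fin.sum_univ_eq_sum_range (fun l => g i (x l) * triangularDual g x l (x j)),
        Finset.sum_congr rfl fun l hl => by rw [ih l (Finset.mem_range.mp hl), mul_boole]]
      simp [Finset.sum_ite_eq']
    rw [triangularDual]
    simp only [sub_apply, FunLike.coe_sum, Finset.sum_apply, FunLike.coe_smul, Pi.smul_apply,
      smul_eq_mul, hsum]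
    rcases lt_trichotomy i j with h | rfl | h
    · simp [hlt i j h, h.ne, h.not_gt]
    · simp [hdiag]
    · simp [h, h.ne']

end Triangular

section OrbitSpan

variable {X : Type*} [NormedAddCommGroup X] [NormedSpace ℂ X] (S : X →L[ℂ] X) (x₀ : X)

theorem isClosed_closedSpanOrbitFrom (k : ℕ) : IsClosed (closedSpanOrbitFrom S x₀ k : Set X) :=
  Submodule.isClosed_topologicalClosure _

variable {S x₀}

theorem pow_apply_mem_closedSpanOrbitFrom {k n : ℕ} (h : k ≤ n) :
    (S ^ n) x₀ ∈ closedSpanOrbitFrom S x₀ k :=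
  Submodule.le_topologicalClosure _ (Submodule.subset_span ⟨n, h, rfl⟩)

theorem closedSpanOrbitFrom_le {k : ℕ} {Y : Submodule ℂ X} (hY : IsClosed (Y : Set X))
    (h : ∀ n, k ≤ n → (S ^ n) x₀ ∈ Y) : closedSpanOrbitFrom S x₀ k ≤ Y :=
  Submodule.topologicalClosure_minimal _
    (Submodule.span_le.mpr fun _ ⟨n, hn, hy⟩ => hy ▸ h n hn) hY

variable (S x₀) in
theorem closedSpanOrbitFrom_antitone : Antitone (closedSpanOrbitFrom S x₀) :=
  fun _ _ hkm => closedSpanOrbitFrom_le (isClosed_closedSpanOrbitFrom S x₀ _)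
    fun _ hn => pow_apply_mem_closedSpanOrbitFrom (hkm.trans hn)

theorem closedSpanOrbitFrom_succ_le_comap {T : X →L[ℂ] X} (hTS : T.comp S = .id ℂ X) (k : ℕ) :
    closedSpanOrbitFrom S x₀ (k + 1) ≤ (closedSpanOrbitFrom S x₀ k).comap (T : X →ₗ[ℂ] X) := by
  refine closedSpanOrbitFrom_le ((isClosed_closedSpanOrbitFrom S x₀ k).preimage T.continuous) ?_
  intro n hn
  obtain ⟨m, rfl⟩ := Nat.exists_eq_add_of_le' (le_of_add_le_right hn)
  have hTS_apply : T ((S ^ (m + 1)) x₀) = (S ^ m) x₀ := by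
    rw [pow_succ', mul_apply_eq_comp]
    exact DFunLike.congr_fun hTS _
  rw [Submodule.mem_comap, ContinuousLinearMap.coe_coe, hTS_apply]
  exact pow_apply_mem_closedSpanOrbitFrom (by omega)

theorem closedSpanOrbitFrom_eq_succ_of_mem {k : ℕ}
    (h : (S ^ k) x₀ ∈ closedSpanOrbitFrom S x₀ (k + 1)) :
    closedSpanOrbitFrom S x₀ k = closedSpanOrbitFrom S x₀ (k + 1) := by
  refine le_antisymm (closedSpanOrbitFrom_le (isClosed_closedSpanOrbitFrom S x₀ _) fun n hn => ?_)
    (closedSpanOrbitFrom_antitone S x₀ k.le_succ)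
  rcases hn.eq_or_lt with rfl | hlt
  · exact h
  · exact pow_apply_mem_closedSpanOrbitFrom hlt

theorem pow_apply_notMem_closedSpanOrbitFrom_succ {T : X →L[ℂ] X} (hTS : T.comp S = .id ℂ X)
    (htrans : IsTransitiveOp T) (hx₀ : x₀ ≠ 0) (hN : closedSpanOrbitFrom S x₀ 1 ≠ ⊤) {k : ℕ}
    (hk : 1 ≤ k) : (S ^ k) x₀ ∉ closedSpanOrbitFrom S x₀ (k + 1) := by
  intro hmem
  have hinv : ∀ y ∈ closedSpanOrbitFrom S x₀ (k + 1), T y ∈ closedSpanOrbitFrom S x₀ (k + 1) :=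
    fun y hy => closedSpanOrbitFrom_eq_succ_of_mem hmem ▸ closedSpanOrbitFrom_succ_le_comap hTS k hy
  rcases htrans _ (isClosed_closedSpanOrbitFrom S x₀ _) hinv with hbot | htop
  · have hSinj : Function.Injective ⇑(S ^ (k + 1)) := by
      rw [FunLike.coe_pow_eq_iterate]
      have hleft : Function.LeftInverse T S := fun y => DFunLike.congr_fun hTS y
      exact hleft.injective.iterate _
    have hx : (S ^ (k + 1)) x₀ ∈ closedSpanOrbitFrom S x₀ (k + 1) :=
      pow_apply_mem_closedSpanOrbitFrom le_rfl
    rw [hbot, Submodule.mem_bot] at hx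
    exact hx₀ (hSinj (hx.trans (map_zero _).symm))
  · exact hN (top_unique (htop ▸ closedSpanOrbitFrom_antitone S x₀ (by omega)))

end OrbitSpan

theorem exists_biorthogonal_system_general
    (X : Type*) [NormedAddCommGroup X] [NormedSpace ℂ X]
    (T S : X →L[ℂ] X)
    (hTS : T.comp S = ContinuousLinearMap.id ℂ X)
    (htrans : IsTransitiveOp T)
    (x₀ : X) (hx₀ : x₀ ≠ 0)
    (hN : closedSpanOrbitFrom S x₀ 1 ≠ ⊤) :
    ∃ f : ℕ → (X →L[ℂ] ℂ), ∀ i j : ℕ, 1 ≤ i → 1 ≤ j →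
      f i ((S ^ j) x₀) = if i = j then 1 else 0 := by
  have hsep (k : ℕ) : ∃ g : StrongDual ℂ X, g ((S ^ (k + 1)) x₀) = 1 ∧
      ∀ y ∈ closedSpanOrbitFrom S x₀ (k + 2), g y = 0 :=
    Submodule.exists_dual_eq_one_of_notMem (isClosed_closedSpanOrbitFrom S x₀ _)
      (pow_apply_notMem_closedSpanOrbitFrom_succ hTS htrans hx₀ hN k.succ_pos)
  choose g hg_one hg_zero using hsep
  have hg_lt (i j : ℕ) (hij : i < j) : g i ((S ^ (j + 1)) x₀) = 0 :=
    hg_zero i _ (pow_apply_mem_closedSpanOrbitFrom (by omega))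
  refine ⟨fun i => triangularDual g (fun j => (S ^ (j + 1)) x₀) (i - 1), fun i j hi hj => ?_⟩
  obtain ⟨i, rfl⟩ := Nat.exists_eq_add_of_le' hi
  obtain ⟨j, rfl⟩ := Nat.exists_eq_add_of_le' hj
  simpa using triangularDual_apply g _ hg_one hg_lt i j

/-- Let `X` be a complex separable Banach space, `T ∈ B(X)` invertible
(with inverse `S`) and transitive, and `x₀ ≠ 0` with `𝔑 ≠ X` where `𝔑 = [T^{−n}x₀ : n ≥ 1]`.
With `xₙ = T^{−n}x₀`, there is a sequence `(xₙ*) ⊆ X*` with `⟨xᵢ*, xⱼ⟩ = δᵢⱼ` for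
`i, j ≥ 1`, i.e. a bi-orthogonal system. -/
theorem exists_biorthogonal_system
    (X : Type*) [NormedAddCommGroup X] [NormedSpace ℂ X] [CompleteSpace X]
    [TopologicalSpace.SeparableSpace X]
    (T S : X →L[ℂ] X)
    (hTS : T.comp S = ContinuousLinearMap.id ℂ X)
    (hST : S.comp T = ContinuousLinearMap.id ℂ X)
    (htrans : IsTransitiveOp T)
    (x₀ : X) (hx₀ : x₀ ≠ 0)
    (hN : closedSpanOrbitFrom S x₀ 1 ≠ ⊤) :
    ∃ f : ℕ → (X →L[ℂ] ℂ), ∀ i j : ℕ, 1 ≤ i → 1 ≤ j →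
      f i ((S ^ j) x₀) = if i = j then 1 else 0 :=
  exists_biorthogonal_system_general X T S hTS htrans x₀ hx₀ hN
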